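/- Let 𝓗 be a complex Hilbert space, H a bounded self-adjoint operator on 𝓗, P an orthogonal projection on 𝓗 (P = P* and P² = P), U a unitary operator on 𝓗, and R a bounded operator commuting with H (HR = RH). Define the effective operator H_eff := U* (P H P) U. Then for every t ∈ ℝ, ‖(exp(−itH) − U exp(−itH_eff) U*) P R‖ ≤ 2 |t| · ‖[H, P] R‖. -/

import Mathlib

open NormedSpace

/-!
Conjugating by `U` turns the effective propagator into `exp (-it PHP)`. For self-adjoint `X`, `Y`
the propagators are unitary, so differentiating `s ↦ exp (isX) Z exp (-isY)` gives the Duhamel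
bound `‖exp (-itX) Z - Z exp (-itY)‖ ≤ |t| ‖XZ - ZY‖`. Applied with `Z = PR` to the pairs
`(H, H)` and `(PHP, H)`, where `R` commutes with `H` and `P² = P`, both commutator expressions
become `[H, P] R`, the second one up to a left factor `P` of norm at most one.
-/

theorem mul_exp_star_mul_mul_mul_star {A : Type*} [NormedRing A] [NormedAlgebra ℚ A]
    [CompleteSpace A] [StarRing A] {u : A} (hu : u ∈ unitary A) (x : A) :
    u * exp (star u * x * u) * star u = exp x := by
  have hconj : exp (star u * x * u) = star u * exp x * u :=
    exp_units_conj' ⟨u, star u, hu.2, hu.1⟩ x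
  rw [hconj, ← mul_assoc, ← mul_assoc, Unitary.mul_star_self_of_mem hu, one_mul, mul_assoc,
    Unitary.mul_star_self_of_mem hu, mul_one]

theorem mul_mul_sub_mul_mul_eq_of_commute {α : Type*} [Ring α] (p : α) {x r : α}
    (hxr : Commute x r) : x * (p * r) - p * r * x = (x * p - p * x) * r := by
  rw [mul_assoc p r x, ← hxr.eq]
  noncomm_ring

theorem mul_mul_mul_sub_mul_mul_eq_of_commute {α : Type*} [Ring α] {p x r : α}
    (hp : IsIdempotentElem p) (hxr : Commute x r) :
    p * x * p * (p * r) - p * r * x = p * ((x * p - p * x) * r) := by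
  have hpp (y : α) : p * (p * y) = p * y := by rw [← mul_assoc, hp.eq]
  rw [mul_assoc p r x, ← hxr.eq]
  simp only [mul_sub, sub_mul, mul_assoc, hpp]

theorem hasDerivAt_exp_neg_smul_mul_mul_exp_smul {A : Type*} [NormedRing A] [NormedAlgebra ℂ A]
    [CompleteSpace A] (a b Z : A) (s : ℝ) :
    HasDerivAt (fun s : ℝ => exp ((s : ℂ) • -a) * Z * exp ((s : ℂ) • b))
      (-(exp ((s : ℂ) • -a) * (a * Z - Z * b) * exp ((s : ℂ) • b))) s := by
  have h := (((hasDerivAt_exp_smul_const (-a) (s : ℂ)).mul_const Z).mul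
    (hasDerivAt_exp_smul_const' b (s : ℂ))).scomp s Complex.ofRealCLM.hasDerivAt
  refine h.congr_deriv ?_
  rw [Complex.ofRealCLM_apply, Complex.ofReal_one, one_smul]
  noncomm_ring

section CStarRing

variable {A : Type*} [NormedRing A] [StarRing A] [CStarRing A] [NormedAlgebra ℂ A]
  [StarModule ℂ A] [CompleteSpace A]

theorem exp_ofReal_smul_mem_unitary {a : A} (ha : a ∈ skewAdjoint A) (s : ℝ) :
    exp ((s : ℂ) • a) ∈ unitary A :=
  let +nondep : NormedAlgebra ℚ A := .restrictScalars ℚ ℂ A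
  exp_mem_unitary_of_mem_skewAdjoint <| by
    rw [skewAdjoint.mem_iff, star_smul, skewAdjoint.mem_iff.mp ha, Complex.star_def,
      Complex.conj_ofReal, smul_neg]

theorem norm_exp_smul_mul_sub_mul_exp_smul_le {a b : A} (ha : a ∈ skewAdjoint A)
    (hb : b ∈ skewAdjoint A) (Z : A) (t : ℝ) :
    ‖exp ((t : ℂ) • a) * Z - Z * exp ((t : ℂ) • b)‖ ≤ |t| * ‖a * Z - Z * b‖ := by
  let +nondep : NormedAlgebra ℚ A := .restrictScalars ℚ ℂ A
  set f : ℝ → A := fun s => exp ((s : ℂ) • -a) * Z * exp ((s : ℂ) • b)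
  have hmvt : ‖f t - f 0‖ ≤ ‖a * Z - Z * b‖ * ‖t - 0‖ :=
    convex_univ.norm_image_sub_le_of_norm_hasDerivWithin_le
      (fun s _ => (hasDerivAt_exp_neg_smul_mul_mul_exp_smul a b Z s).hasDerivWithinAt)
      (fun s _ => by
        rw [norm_neg, CStarRing.norm_mul_mem_unitary _ (exp_ofReal_smul_mem_unitary hb s),
          CStarRing.norm_mem_unitary_mul _ (exp_ofReal_smul_mem_unitary (neg_mem ha) s)])
      trivial trivial
  have hinv : exp ((t : ℂ) • a) * exp ((t : ℂ) • -a) = 1 := by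
    rw [smul_neg, ← exp_add_of_commute (Commute.refl _).neg_right, add_neg_cancel, exp_zero]
  have hsplit : exp ((t : ℂ) • a) * Z - Z * exp ((t : ℂ) • b) =
      exp ((t : ℂ) • a) * (f 0 - f t) := by
    simp only [f, Complex.ofReal_zero, zero_smul, exp_zero, mul_one, one_mul, mul_sub,
      ← mul_assoc, hinv]
  calc ‖exp ((t : ℂ) • a) * Z - Z * exp ((t : ℂ) • b)‖ = ‖f t - f 0‖ := by
        rw [hsplit, CStarRing.norm_mem_unitary_mul _ (exp_ofReal_smul_mem_unitary ha t),
          norm_sub_rev]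
    _ ≤ ‖a * Z - Z * b‖ * ‖t - 0‖ := hmvt
    _ = |t| * ‖a * Z - Z * b‖ := by rw [sub_zero, Real.norm_eq_abs, mul_comm]

theorem IsSelfAdjoint.norm_exp_mul_sub_mul_exp_le {X Y : A} (hX : IsSelfAdjoint X)
    (hY : IsSelfAdjoint Y) (Z : A) (t : ℝ) :
    ‖NormedSpace.exp ((-(Complex.I * t)) • X) * Z -
        Z * NormedSpace.exp ((-(Complex.I * t)) • Y)‖ ≤ |t| * ‖X * Z - Z * Y‖ := by
  have hskew {W : A} (hW : IsSelfAdjoint W) : -(Complex.I • W) ∈ skewAdjoint A :=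
    neg_mem (hW.smul_mem_skewAdjoint Complex.conj_I)
  have hsmul (W : A) : (-(Complex.I * t)) • W = (t : ℂ) • -(Complex.I • W) := by
    rw [smul_neg, smul_smul, neg_smul, mul_comm]
  have hcomm :
      -(Complex.I • X) * Z - Z * -(Complex.I • Y) = -(Complex.I • (X * Z - Z * Y)) := by
    simp only [neg_mul, mul_neg, smul_mul_assoc, mul_smul_comm, smul_sub]
    abel
  simpa only [hsmul, hcomm, norm_neg, norm_smul, Complex.norm_I, one_mul] using
    norm_exp_smul_mul_sub_mul_exp_smul_le (hskew hX) (hskew hY) Z t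

end CStarRing

/-- Abstract core of Corollary 2.3: the dynamics generated by `H` on the range of a projection
`P` is approximated by the effective dynamics `H_eff = U* (P H P) U`, with error controlled by
the commutator `[H, P]` composed with a cutoff `R` commuting with `H`, linearly in `|t|`. -/
theorem norm_exp_sub_effective_exp_le {𝓗 : Type*} [NormedAddCommGroup 𝓗]
    [InnerProductSpace ℂ 𝓗] [CompleteSpace 𝓗] (H P U R : 𝓗 →L[ℂ] 𝓗)
    (hH : IsSelfAdjoint H) (hP_sa : IsSelfAdjoint P) (hP_idem : P * P = P)
    (hU : U * star U = 1) (hU' : star U * U = 1) (hR : H * R = R * H) (t : ℝ) :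
    ‖(exp ((-(Complex.I * t)) • H) -
        U * exp ((-(Complex.I * t)) • (star U * (P * H * P) * U)) * star U) * (P * R)‖ ≤
      2 * |t| * ‖(H * P - P * H) * R‖ := by
  let +nondep : NormedAlgebra ℚ (𝓗 →L[ℂ] 𝓗) := .restrictScalars ℚ ℂ _
  have hconj : U * exp ((-(Complex.I * t)) • (star U * (P * H * P) * U)) * star U =
      exp ((-(Complex.I * t)) • (P * H * P)) := by
    rw [← smul_mul_assoc, ← mul_smul_comm,
      mul_exp_star_mul_mul_mul_star (Unitary.mem_iff.mpr ⟨hU', hU⟩)]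
  have hPHP : IsSelfAdjoint (P * H * P) := by simpa only [hP_sa.star_eq] using hH.conjugate' P
  have h₁ := hH.norm_exp_mul_sub_mul_exp_le hH (P * R) t
  have h₂ := hPHP.norm_exp_mul_sub_mul_exp_le hH (P * R) t
  rw [mul_mul_sub_mul_mul_eq_of_commute P hR] at h₁
  rw [mul_mul_mul_sub_mul_mul_eq_of_commute hP_idem hR] at h₂
  have hPK : ‖P * ((H * P - P * H) * R)‖ ≤ ‖(H * P - P * H) * R‖ :=
    (norm_mul_le _ _).trans <| mul_le_of_le_one_left (norm_nonneg _) <|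
      IsStarProjection.norm_le P ⟨hP_idem, hP_sa⟩
  rw [hconj]
  set e := exp ((-(Complex.I * t)) • H)
  set e' := exp ((-(Complex.I * t)) • (P * H * P))
  calc ‖(e - e') * (P * R)‖ = ‖(e * (P * R) - P * R * e) - (e' * (P * R) - P * R * e)‖ := by
        congr 1
        noncomm_ring
    _ ≤ |t| * ‖(H * P - P * H) * R‖ + |t| * ‖(H * P - P * H) * R‖ :=
        (norm_sub_le _ _).trans (add_le_add h₁ (h₂.trans (by gcongr)))
    _ = 2 * |t| * ‖(H * P - P * H) * R‖ := by ring
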